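/- (Formula (5.1) for the true confidence coefficient.) Let (Ω, μ) be a probability space, let W : Ω → 𝒲 be a measurable map into a measurable space 𝒲, and let Y : Ω → ℝ be a random variable. Let t, t_o : 𝒲 → ℝ be measurable with t(W) > 0 and t_o(W) > 0 almost surely, fix δ ∈ ℝ, let p₁ : 𝒲 → (0,1) be measurable, and suppose the conditional distribution of Y given W under μ is the Gaussian measure with mean δ·t_o(W) and variance t_o(W). Define the combined p-value p(W, Y; δ) = Φ̄( (√(t(W))·z(p₁(W)) + Y − δ·t_o(W)) / √(t(W) + t_o(W)) ). Then for every γ ∈ (0,1), μ{ p(W, Y; δ) < γ } = ∫ Φ( ( √(t(w))·z(p₁(w)) − √(t(w) + t_o(w))·z(γ) ) / √(t_o(w)) ) d(μ ∘ W⁻¹)(w). -/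

import Mathlib

/-! Conditionally on `W = w`, `Y` is Gaussian with mean `δ t_o(w)` and variance `t_o(w)`, and since
`Φ̄` is strictly decreasing the event `p(W, Y; δ) < γ` is the event that `Y` exceeds the threshold
`c(w) = δ t_o(w) - √t(w) z(p₁(w)) + √(t(w) + t_o(w)) z(γ)`. Its conditional probability is
`Φ((δ t_o(w) - c(w)) / √t_o(w))`, and integrating it against the law of `W` (the joint law of
`(W, Y)` being `law(W) ⊗ condDistrib Y W μ`) gives the formula. -/

open MeasureTheory ProbabilityTheory Set
open Filter Topology

/-- The cumulative distribution function `Φ` of the standard Gaussian measure on `ℝ`. -/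
noncomputable def stdGaussCDF (x : ℝ) : ℝ := ((gaussianReal 0 1) (Set.Iic x)).toReal

/-- The survival function `Φ̄ = 1 - Φ` of the standard Gaussian measure. -/
noncomputable def stdGaussSurv (x : ℝ) : ℝ := 1 - stdGaussCDF x

/-- `z(u) = Φ̄⁻¹(u)`, the inverse of the standard Gaussian survival function. -/
noncomputable def zval : ℝ → ℝ := Function.invFun stdGaussSurv

/-- The uniform distribution on `(0,1)`: Lebesgue measure restricted to `(0,1)`. -/
noncomputable def unif01 : Measure ℝ := volume.restrict (Set.Ioo (0 : ℝ) 1)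

lemma stdGaussSurv_eq_one_sub_cdf : stdGaussSurv = fun x ↦ 1 - cdf (gaussianReal 0 1) x := by
  funext x
  rw [stdGaussSurv, stdGaussCDF, cdf_eq_real, measureReal_def]

lemma stdGaussCDF_eq_integral (x : ℝ) :
    stdGaussCDF x = ∫ y in Iic x, gaussianPDFReal 0 1 y := by
  rw [stdGaussCDF, gaussianReal_apply_eq_integral 0 one_ne_zero,
    ENNReal.toReal_ofReal (integral_nonneg (gaussianPDFReal_nonneg 0 1))]

lemma continuous_stdGaussCDF : Continuous stdGaussCDF := by
  have hpdf : Integrable (gaussianPDFReal 0 1) := integrable_gaussianPDFReal 0 1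
  have h : stdGaussCDF = fun x ↦ stdGaussCDF 0 + ∫ y in (0 : ℝ)..x, gaussianPDFReal 0 1 y := by
    funext x
    rw [stdGaussCDF_eq_integral, stdGaussCDF_eq_integral,
      ← intervalIntegral.integral_Iic_sub_Iic hpdf.integrableOn hpdf.integrableOn]
    ring
  rw [h]
  exact continuous_const.add (hpdf.continuous_primitive 0)

lemma strictMono_stdGaussCDF : StrictMono stdGaussCDF := by
  intro x y hxy
  have hpos : (gaussianReal 0 1) (Ioc x y) ≠ 0 := fun h ↦ by
    have := gaussianReal_absolutelyContinuous' 0 one_ne_zero h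
    simp [Real.volume_Ioc] at this
    linarith
  have hsplit := measureReal_union (μ := gaussianReal 0 1) (Iic_disjoint_Ioc (le_refl x))
    (measurableSet_Ioc (b := y))
  rw [Iic_union_Ioc_eq_Iic hxy.le] at hsplit
  have : 0 < (gaussianReal 0 1).real (Ioc x y) :=
    ENNReal.toReal_pos hpos (measure_ne_top _ _)
  simp only [stdGaussCDF, ← measureReal_def]
  linarith

lemma strictAnti_stdGaussSurv : StrictAnti stdGaussSurv := fun _ _ hxy ↦
  sub_lt_sub_left (strictMono_stdGaussCDF hxy) 1

lemma continuous_stdGaussSurv : Continuous stdGaussSurv :=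
  continuous_const.sub continuous_stdGaussCDF

lemma stdGaussSurv_zval {γ : ℝ} (hγ : γ ∈ Ioo (0 : ℝ) 1) : stdGaussSurv (zval γ) = γ := by
  have hTop : Tendsto stdGaussSurv atTop (𝓝 0) := by
    simpa [stdGaussSurv_eq_one_sub_cdf] using (tendsto_cdf_atTop (gaussianReal 0 1)).const_sub 1
  have hBot : Tendsto stdGaussSurv atBot (𝓝 1) := by
    simpa [stdGaussSurv_eq_one_sub_cdf] using (tendsto_cdf_atBot (gaussianReal 0 1)).const_sub 1
  exact Function.invFun_eq <| mem_range_of_exists_le_of_exists_ge continuous_stdGaussSurv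
    (hTop.eventually_le_const hγ.1).exists (hBot.eventually_const_le hγ.2).exists

lemma stdGaussSurv_lt_iff {γ : ℝ} (hγ : γ ∈ Ioo (0 : ℝ) 1) {x : ℝ} :
    stdGaussSurv x < γ ↔ zval γ < x := by
  conv_lhs => rw [← stdGaussSurv_zval hγ]
  exact strictAnti_stdGaussSurv.lt_iff_gt

/-- `Function.invFun f` is `Function.extend f id` with a constant default, and a continuous
injection of `ℝ` is a measurable embedding. -/
lemma measurable_zval : Measurable zval :=
  (continuous_stdGaussSurv.measurableEmbedding strictAnti_stdGaussSurv.injective).measurable_extend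
    measurable_id measurable_const

lemma gaussianReal_Ioi (m c : ℝ) {v : NNReal} (hv : v ≠ 0) :
    gaussianReal m v (Ioi c) = ENNReal.ofReal (stdGaussCDF ((m - c) / √v)) := by
  have hsqrt : 0 < √(v : ℝ) := Real.sqrt_pos.mpr (by positivity)
  have hmap : (gaussianReal 0 1).map (fun x ↦ m - √v * x) = gaussianReal m v := by
    have : (gaussianReal 0 1).map (fun x ↦ √v * x) = gaussianReal 0 v := by
      rw [gaussianReal_map_const_mul, mul_zero]
      congr
      ext
      simp
    rw [← sub_zero m, ← gaussianReal_map_const_sub, ← this,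
      Measure.map_map (by fun_prop) (by fun_prop), sub_zero]
    rfl
  have hpre : (fun x ↦ m - √v * x) ⁻¹' Ioi c = Iio ((m - c) / √v) := by
    ext x
    simp only [mem_preimage, mem_Ioi, mem_Iio, lt_div_iff₀ hsqrt]
    constructor <;> intro h <;> linarith
  rw [← hmap, Measure.map_apply (by fun_prop) measurableSet_Ioi, hpre,
    measure_congr ((gaussianReal_absolutelyContinuous 0 one_ne_zero).ae_eq Iio_ae_eq_Iic),
    stdGaussCDF, ENNReal.ofReal_toReal (measure_ne_top _ _)]

lemma measureReal_lt_eq_integral_stdGaussCDF_of_condDistrib {Ω 𝒲 : Type*}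
    [MeasurableSpace Ω] [MeasurableSpace 𝒲] {μ : Measure Ω} [IsFiniteMeasure μ]
    {W : Ω → 𝒲} {Y : Ω → ℝ} (hW : Measurable W) (hY : AEMeasurable Y μ)
    {c m : 𝒲 → ℝ} {v : 𝒲 → NNReal} (hc : Measurable c)
    (hcond : ∀ᵐ w ∂(μ.map W), condDistrib Y W μ w = gaussianReal (m w) (v w))
    (hv : ∀ᵐ w ∂(μ.map W), v w ≠ 0) :
    μ.real {ω | c (W ω) < Y ω} =
      ∫ w, stdGaussCDF ((m w - c w) / √(v w)) ∂(μ.map W) := by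
  have hS : MeasurableSet {p : 𝒲 × ℝ | c p.1 < p.2} :=
    measurableSet_lt (hc.comp measurable_fst) measurable_snd
  have hsection : ∀ᵐ w ∂(μ.map W), condDistrib Y W μ w (Ioi (c w)) =
      ENNReal.ofReal (stdGaussCDF ((m w - c w) / √(v w))) := by
    filter_upwards [hcond, hv] with w hw hvw
    rw [hw, gaussianReal_Ioi _ _ hvw]
  calc μ.real {ω | c (W ω) < Y ω}
      = ((μ.map W ⊗ₘ condDistrib Y W μ) {p | c p.1 < p.2}).toReal := by
        rw [compProd_map_condDistrib hY, Measure.map_apply_of_aemeasurable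
          (hW.aemeasurable.prodMk hY) hS]
        rfl
    _ = ∫ w, (condDistrib Y W μ w (Ioi (c w))).toReal ∂(μ.map W) := by
        rw [Measure.compProd_apply hS, ← integral_toReal
          (Kernel.measurable_kernel_prodMk_left hS).aemeasurable
          (ae_of_all _ fun _ ↦ measure_lt_top _ _)]
        rfl
    _ = ∫ w, stdGaussCDF ((m w - c w) / √(v w)) ∂(μ.map W) := by
        refine integral_congr_ae ?_
        filter_upwards [hsection] with w hw
        rw [hw, ENNReal.toReal_ofReal]
        exact ENNReal.toReal_nonneg

lemma Real.sqrt_coe_toNNReal (x : ℝ) : √(x.toNNReal : ℝ) = √x := by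
  rw [Real.sqrt, Real.sqrt, Real.toNNReal_coe]

theorem stmt14_general {Ω 𝒲 : Type*} [MeasurableSpace Ω] [MeasurableSpace 𝒲]
    (μ : Measure Ω) [IsProbabilityMeasure μ]
    (W : Ω → 𝒲) (hW : Measurable W)
    (Y : Ω → ℝ) (hY : Measurable Y)
    (t t_o : 𝒲 → ℝ) (ht : Measurable t) (ht_o : Measurable t_o)
    (htpos : ∀ᵐ ω ∂μ, 0 < t (W ω)) (ht_opos : ∀ᵐ ω ∂μ, 0 < t_o (W ω))
    (δ : ℝ)
    (p₁ : 𝒲 → ℝ) (hp₁ : Measurable p₁)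
    (hcond : ∀ᵐ w ∂(μ.map W),
      condDistrib Y W μ w = gaussianReal (δ * t_o w) (Real.toNNReal (t_o w))) :
    ∀ γ ∈ Set.Ioo (0 : ℝ) 1,
      (μ {ω | stdGaussSurv
          ((Real.sqrt (t (W ω)) * zval (p₁ (W ω)) + Y ω - δ * t_o (W ω)) /
            Real.sqrt (t (W ω) + t_o (W ω))) < γ}).toReal =
        ∫ w, stdGaussCDF
          ((Real.sqrt (t w) * zval (p₁ w) - Real.sqrt (t w + t_o w) * zval γ) /
            Real.sqrt (t_o w)) ∂(μ.map W) := by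
  intro γ hγ
  set c : 𝒲 → ℝ := fun w ↦ δ * t_o w - √(t w) * zval (p₁ w) + √(t w + t_o w) * zval γ
  have hc : Measurable c := by
    have := measurable_zval.comp hp₁
    fun_prop
  have hevent : {ω | stdGaussSurv ((√(t (W ω)) * zval (p₁ (W ω)) + Y ω - δ * t_o (W ω)) /
      √(t (W ω) + t_o (W ω))) < γ} =ᵐ[μ] {ω | c (W ω) < Y ω} := by
    refine eventuallyEq_set.mpr ?_
    filter_upwards [htpos, ht_opos] with ω htω ht_oω
    rw [stdGaussSurv_lt_iff hγ, lt_div_iff₀ (Real.sqrt_pos.mpr (by linarith))]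
    constructor <;> intro h <;> linarith
  have hv : ∀ᵐ w ∂(μ.map W), (t_o w).toNNReal ≠ 0 :=
    ((ae_map_iff hW.aemeasurable (measurableSet_lt measurable_const ht_o)).mpr ht_opos).mono
      fun _ h ↦ (Real.toNNReal_pos.mpr h).ne'
  rw [← measureReal_def, measureReal_congr hevent,
    measureReal_lt_eq_integral_stdGaussCDF_of_condDistrib hW hY.aemeasurable hc hcond hv]
  congr with w
  simp only [c, Real.sqrt_coe_toNNReal]
  congr 2
  ring

theorem stmt14 {Ω 𝒲 : Type*} [MeasurableSpace Ω] [MeasurableSpace 𝒲]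
    (μ : Measure Ω) [IsProbabilityMeasure μ]
    (W : Ω → 𝒲) (hW : Measurable W)
    (Y : Ω → ℝ) (hY : Measurable Y)
    (t t_o : 𝒲 → ℝ) (ht : Measurable t) (ht_o : Measurable t_o)
    (htpos : ∀ᵐ ω ∂μ, 0 < t (W ω)) (ht_opos : ∀ᵐ ω ∂μ, 0 < t_o (W ω))
    (δ : ℝ)
    (p₁ : 𝒲 → ℝ) (hp₁ : Measurable p₁) (hp₁val : ∀ w, p₁ w ∈ Set.Ioo (0 : ℝ) 1)
    (hcond : ∀ᵐ w ∂(μ.map W),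
      condDistrib Y W μ w = gaussianReal (δ * t_o w) (Real.toNNReal (t_o w))) :
    ∀ γ ∈ Set.Ioo (0 : ℝ) 1,
      (μ {ω | stdGaussSurv
          ((Real.sqrt (t (W ω)) * zval (p₁ (W ω)) + Y ω - δ * t_o (W ω)) /
            Real.sqrt (t (W ω) + t_o (W ω))) < γ}).toReal =
        ∫ w, stdGaussCDF
          ((Real.sqrt (t w) * zval (p₁ w) - Real.sqrt (t w + t_o w) * zval γ) /
            Real.sqrt (t_o w)) ∂(μ.map W) :=
  stmt14_general μ W hW Y hY t t_o ht ht_o htpos ht_opos δ p₁ hp₁ hcond
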